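/- For every t ∈ ℕ the pathwise identity M_t / S_t = 1 + Q_t − L_t holds. Moreover Q = (Q_t) is a supermartingale, and L = (L_t) is a nondecreasing process that satisfies L_t = L_{t−1} whenever S_t = S_{t−1} (L only increases when M attains a new maximum). Consequently Z_t ≤ 1 + Q_t − L_t almost surely. -/

import Mathlib

open MeasureTheory Filter Set

/-!
Writing `ΔM_k = M_{k+1} - M_k`, the increment of `M_t / S_t` is
`ΔM_t / S_{t+1} - M_t (1/S_t - 1/S_{t+1})`, which telescopes to `M_t / S_t = 1 + Q_t - L_t`.
The sum `Q` splits as the martingale transform `∑ S_k⁻¹ ΔM_k` of the supermartingale `M` by the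
bounded nonnegative adapted weights `S_k⁻¹`, plus `∑ ΔM_k (S_{k+1}⁻¹ - S_k⁻¹)`, which is
nonincreasing: a term is nonzero only when `M_{k+1}` is a new maximum, and then `ΔM_k > 0` while
`S_{k+1}⁻¹ < S_k⁻¹`. Hence `Q` is a supermartingale.

For the bound on `Z`, `τ_F ≥ t` means that `M` attains its running maximum again at a time
`τ ≥ t`, where `M_τ ≥ S_t`. Optional stopping at `τ ∧ (t + n)` gives
`S_t P(τ ≤ t + n | ℱ_t) ≤ M_t`, and letting `n → ∞` yields `Z_t ≤ M_t / S_t = 1 + Q_t - L_t`.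
-/

/-- The running maximum `S t = max_{s ≤ t} M s`. -/
noncomputable def runMax {Ω : Type*} (M : ℕ → Ω → ℝ) (t : ℕ) (ω : Ω) : ℝ :=
  (Finset.range (t + 1)).sup' (Finset.nonempty_range_iff.mpr (Nat.succ_ne_zero t))
    (fun s => M s ω)

/-- The (ℕ ∪ {∞})-valued time of the final attained maximum of `M`. -/
noncomputable def tauF {Ω : Type*} (M : ℕ → Ω → ℝ) (ω : Ω) : ℕ∞ :=
  ⨆ s ∈ {s : ℕ | M s ω = runMax M s ω}, (s : ℕ∞)

/-- `Q t = Σ_{i=1}^t (M_i − M_{i−1})/S_i`. -/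
noncomputable def Qproc {Ω : Type*} (M : ℕ → Ω → ℝ) (t : ℕ) (ω : Ω) : ℝ :=
  ∑ i ∈ Finset.range t, (M (i + 1) ω - M i ω) / runMax M (i + 1) ω

/-- `L t = Σ_{q=1}^t M_{q−1} (1/S_{q−1} − 1/S_q)`. -/
noncomputable def Lproc {Ω : Type*} (M : ℕ → Ω → ℝ) (t : ℕ) (ω : Ω) : ℝ :=
  ∑ q ∈ Finset.range t, M q ω * (1 / runMax M q ω - 1 / runMax M (q + 1) ω)

section RunningMax

variable {Ω : Type*} {M : ℕ → Ω → ℝ}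

lemma runMax_zero (ω : Ω) : runMax M 0 ω = M 0 ω := by
  simp [runMax]

lemma le_runMax {s t : ℕ} (h : s ≤ t) (ω : Ω) : M s ω ≤ runMax M t ω :=
  Finset.le_sup' (fun s => M s ω) (Finset.mem_range.mpr (Nat.lt_succ_of_le h))

lemma runMax_succ (t : ℕ) (ω : Ω) :
    runMax M (t + 1) ω = max (runMax M t ω) (M (t + 1) ω) := by
  simp only [runMax, Finset.range_add_one]
  rw [Finset.sup'_insert, max_comm]

lemma runMax_mono (ω : Ω) : Monotone fun t => runMax M t ω :=
  monotone_nat_of_le_succ fun t => by rw [runMax_succ]; exact le_max_left _ _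

lemma runMax_pos {ω : Ω} (h : 0 < M 0 ω) (t : ℕ) : 0 < runMax M t ω :=
  h.trans_le (le_runMax t.zero_le ω)

lemma one_le_runMax {ω : Ω} (h : 1 ≤ M 0 ω) (t : ℕ) : 1 ≤ runMax M t ω :=
  h.trans (le_runMax t.zero_le ω)

lemma inv_runMax_mem_Icc {ω : Ω} (h : 1 ≤ M 0 ω) (t : ℕ) : (runMax M t ω)⁻¹ ∈ Icc 0 1 :=
  ⟨inv_nonneg.2 (zero_le_one.trans (one_le_runMax h t)), inv_le_one_of_one_le₀ (one_le_runMax h t)⟩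

lemma eq_runMax_iff_runMax_le {t : ℕ} {ω : Ω} : M t ω = runMax M t ω ↔ runMax M t ω ≤ M t ω :=
  ⟨ge_of_eq, fun h => le_antisymm (le_runMax le_rfl ω) h⟩

lemma runMax_succ_eq_of_le {t : ℕ} {ω : Ω} (h : M (t + 1) ω ≤ runMax M t ω) :
    runMax M (t + 1) ω = runMax M t ω := by
  rw [runMax_succ, max_eq_left h]

lemma MeasureTheory.StronglyAdapted.runMax {m0 : MeasurableSpace Ω} {ℱ : Filtration ℕ m0}
    (hM : StronglyAdapted ℱ M) : StronglyAdapted ℱ (runMax M) := fun t =>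
  (@Finset.measurable_range_sup'' _ _ _ (ℱ t) _ _ _ _ fun s hs =>
    ((hM s).mono (ℱ.mono hs)).measurable).stronglyMeasurable

lemma MeasureTheory.StronglyAdapted.inv_runMax {m0 : MeasurableSpace Ω} {ℱ : Filtration ℕ m0}
    (hM : StronglyAdapted ℱ M) : StronglyAdapted ℱ fun t => (_root_.runMax M t)⁻¹ := fun t =>
  (hM.runMax t).measurable.inv.stronglyMeasurable

lemma natCast_le_tauF_iff {t : ℕ} {ω : Ω} :
    (t : ℕ∞) ≤ tauF M ω ↔ ∃ s, t ≤ s ∧ M s ω = runMax M s ω := by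
  refine ⟨fun h => ?_, fun ⟨s, hts, hs⟩ => ?_⟩
  · by_contra! hlt
    cases t with
    | zero => exact hlt 0 le_rfl (runMax_zero ω).symm
    | succ k =>
      have : tauF M ω ≤ k := iSup₂_le fun s hs => by
        exact_mod_cast Nat.lt_succ_iff.1 (not_le.1 fun h' => hlt s h' hs)
      exact absurd (h.trans this) (by norm_cast; omega)
  · exact (Nat.cast_le.2 hts).trans
      (le_iSup₂ (f := fun s (_ : s ∈ {s | M s ω = runMax M s ω}) => (s : ℕ∞)) s hs)

end RunningMax

section Decomposition

variable {Ω : Type*} {M : ℕ → Ω → ℝ} {ω : Ω}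

lemma Qproc_succ (t : ℕ) :
    Qproc M (t + 1) ω = Qproc M t ω + (M (t + 1) ω - M t ω) / runMax M (t + 1) ω :=
  Finset.sum_range_succ _ _

lemma Lproc_succ (t : ℕ) :
    Lproc M (t + 1) ω = Lproc M t ω + M t ω * (1 / runMax M t ω - 1 / runMax M (t + 1) ω) :=
  Finset.sum_range_succ _ _

lemma div_runMax_eq_one_add_Qproc_sub_Lproc (h0 : M 0 ω ≠ 0) (t : ℕ) :
    M t ω / runMax M t ω = 1 + Qproc M t ω - Lproc M t ω := by
  induction t with
  | zero => simp [Qproc, Lproc, runMax_zero, h0]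
  | succ t ih =>
    rw [Qproc_succ, Lproc_succ]
    linear_combination ih

lemma Lproc_monotone (h0 : 0 < M 0 ω) (hnonneg : ∀ t, 0 ≤ M t ω) :
    Monotone fun t => Lproc M t ω := by
  refine monotone_nat_of_le_succ fun t => ?_
  rw [Lproc_succ, le_add_iff_nonneg_right]
  refine mul_nonneg (hnonneg t) (sub_nonneg.mpr ?_)
  exact one_div_le_one_div_of_le (runMax_pos h0 t) (runMax_mono ω t.le_succ)

lemma Lproc_succ_eq_of_runMax_succ_eq {t : ℕ}
    (h : runMax M (t + 1) ω = runMax M t ω) : Lproc M (t + 1) ω = Lproc M t ω := by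
  rw [Lproc_succ, h, sub_self, mul_zero, add_zero]

end Decomposition

section QSupermartingale

variable {Ω : Type*} {m0 : MeasurableSpace Ω} {P : Measure Ω} [IsFiniteMeasure P]
  {ℱ : Filtration ℕ m0}

theorem supermartingale_of_antitone {A : ℕ → Ω → ℝ} (hA : StronglyAdapted ℱ A)
    (hint : ∀ t, Integrable (A t) P) (hanti : ∀ ω, Antitone fun t => A t ω) :
    Supermartingale A ℱ P :=
  supermartingale_nat hA hint fun t => by
    rw [← condExp_of_stronglyMeasurable (ℱ.le t) (hA t) (hint t)]
    exact condExp_mono (hint _) (hint _) (ae_of_all _ fun ω => hanti ω t.le_succ)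

theorem MeasureTheory.Supermartingale.sum_mul_sub {R : ℝ} {ξ f : ℕ → Ω → ℝ}
    (hf : Supermartingale f ℱ P) (hξ : StronglyAdapted ℱ ξ) (hbdd : ∀ n ω, ξ n ω ≤ R)
    (hnonneg : ∀ n ω, 0 ≤ ξ n ω) :
    Supermartingale (fun n => ∑ k ∈ Finset.range n, ξ k * (f (k + 1) - f k)) ℱ P := by
  have h := (hf.neg.sum_mul_sub hξ hbdd hnonneg).neg
  rwa [show (-fun n => ∑ k ∈ Finset.range n, ξ k * ((-f) (k + 1) - (-f) k)) =
      fun n => ∑ k ∈ Finset.range n, ξ k * (f (k + 1) - f k) by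
    funext n ω
    simp only [Pi.neg_apply, Finset.sum_apply, Pi.mul_apply, Pi.sub_apply,
      ← Finset.sum_neg_distrib]
    exact Finset.sum_congr rfl fun k _ => by ring] at h

variable {M : ℕ → Ω → ℝ}

noncomputable def maxCorrection (M : ℕ → Ω → ℝ) (n : ℕ) : Ω → ℝ :=
  ∑ k ∈ Finset.range n, (M (k + 1) - M k) * ((runMax M (k + 1))⁻¹ - (runMax M k)⁻¹)

lemma Qproc_eq_add_maxCorrection :
    Qproc M = (fun n => ∑ k ∈ Finset.range n, (runMax M k)⁻¹ * (M (k + 1) - M k)) +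
      maxCorrection M := by
  funext n ω
  simp only [Qproc, maxCorrection, Pi.add_apply, Finset.sum_apply, ← Finset.sum_add_distrib]
  refine Finset.sum_congr rfl fun k _ => ?_
  simp only [Pi.mul_apply, Pi.sub_apply, Pi.inv_apply]
  ring

lemma sub_mul_inv_runMax_succ_sub_nonpos {t : ℕ} {ω : Ω} (hS : 0 < runMax M t ω) :
    (M (t + 1) ω - M t ω) * ((runMax M (t + 1) ω)⁻¹ - (runMax M t ω)⁻¹) ≤ 0 := by
  rcases le_or_gt (M (t + 1) ω) (runMax M t ω) with h | h
  · rw [runMax_succ_eq_of_le h, sub_self, mul_zero]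
  · refine mul_nonpos_of_nonneg_of_nonpos (by linarith [le_runMax le_rfl ω (M := M) (s := t)]) ?_
    exact sub_nonpos.2 (inv_anti₀ hS (runMax_mono ω t.le_succ))

lemma maxCorrection_antitone {ω : Ω} (h0 : 0 < M 0 ω) : Antitone fun n => maxCorrection M n ω := by
  refine antitone_nat_of_succ_le fun n => ?_
  simp only [maxCorrection, Finset.sum_apply, Finset.sum_range_succ, Pi.mul_apply, Pi.sub_apply,
    Pi.inv_apply]
  linarith [sub_mul_inv_runMax_succ_sub_nonpos (runMax_pos h0 n) (M := M)]

theorem maxCorrection_supermartingale (hM : Supermartingale M ℱ P) (hone : ∀ ω, 1 ≤ M 0 ω) :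
    Supermartingale (maxCorrection M) ℱ P := by
  have hinv := hM.stronglyAdapted.inv_runMax
  have hΔinv (k : ℕ) : StronglyMeasurable[ℱ (k + 1)] ((runMax M (k + 1))⁻¹ - (runMax M k)⁻¹) :=
    (hinv (k + 1)).sub ((hinv k).mono (ℱ.mono k.le_succ))
  refine supermartingale_of_antitone (fun n => ?_) (fun n => ?_)
    fun ω => maxCorrection_antitone (one_pos.trans_le (hone ω))
  · refine Finset.stronglyMeasurable_sum _ fun k hk => StronglyMeasurable.mono ?_
      (ℱ.mono (Finset.mem_range.1 hk))
    exact ((hM.stronglyAdapted (k + 1)).sub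
      ((hM.stronglyAdapted k).mono (ℱ.mono k.le_succ))).mul (hΔinv k)
  · refine integrable_finsetSum' _ fun k _ => ?_
    refine ((hM.integrable _).sub (hM.integrable _)).mul_bdd (c := 1)
      (((hΔinv k).mono (ℱ.le _)).aestronglyMeasurable) (ae_of_all _ fun ω => ?_)
    obtain ⟨h₁, h₂⟩ := inv_runMax_mem_Icc (hone ω) (k + 1)
    obtain ⟨h₃, h₄⟩ := inv_runMax_mem_Icc (hone ω) k
    exact abs_sub_le_of_nonneg_of_le h₁ h₂ h₃ h₄

theorem Qproc_supermartingale (hM : Supermartingale M ℱ P) (hone : ∀ ω, 1 ≤ M 0 ω) :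
    Supermartingale (Qproc M) ℱ P := by
  have hX := hM.sum_mul_sub hM.stronglyAdapted.inv_runMax
    (fun t ω => (inv_runMax_mem_Icc (hone ω) t).2) (fun t ω => (inv_runMax_mem_Icc (hone ω) t).1)
  rw [Qproc_eq_add_maxCorrection]
  exact hX.add (maxCorrection_supermartingale hM hone)

end QSupermartingale

section MaximalInequality

variable {Ω : Type*} {m0 : MeasurableSpace Ω} {P : Measure Ω} [IsFiniteMeasure P]
  {ℱ : Filtration ℕ m0}

protected theorem MeasureTheory.Supermartingale.stoppedProcess {M : ℕ → Ω → ℝ}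
    (hM : Supermartingale M ℱ P) {τ : Ω → ℕ∞} (hτ : IsStoppingTime ℱ τ) :
    Supermartingale (stoppedProcess M τ) ℱ P := by
  have h := (hM.neg.stoppedProcess hτ).neg
  rwa [show -(stoppedProcess (-M) τ) = stoppedProcess M τ by
    ext; simp [stoppedProcess]] at h

theorem condExp_indicator_iUnion_le {m : MeasurableSpace Ω} (hm : m ≤ m0) {A : ℕ → Set Ω}
    (hA : ∀ n, MeasurableSet[m0] (A n)) (hA_mono : Monotone A) {g : Ω → ℝ}
    (hg : StronglyMeasurable[m] g) (hg_int : Integrable g P)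
    (h : ∀ n, P[(A n).indicator fun _ => (1 : ℝ)|m] ≤ᵐ[P] g) :
    P[(⋃ n, A n).indicator fun _ => (1 : ℝ)|m] ≤ᵐ[P] g := by
  have hint {B : Set Ω} (hB : MeasurableSet[m0] B) {s : Set Ω} (hs : MeasurableSet[m] s) :
      ∫ x in s, P[B.indicator fun _ => (1 : ℝ)|m] x ∂P = P.real (s ∩ B) := by
    rw [setIntegral_condExp hm ((integrable_const (1 : ℝ)).indicator hB) hs,
      setIntegral_indicator hB]
    simp
  refine ae_le_of_ae_le_trim (ae_le_of_forall_setIntegral_le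
    (integrable_condExp.trim hm stronglyMeasurable_condExp) (hg_int.trim hm hg) fun s hs _ => ?_)
  rw [← setIntegral_trim hm stronglyMeasurable_condExp hs, ← setIntegral_trim hm hg hs,
    hint (MeasurableSet.iUnion hA) hs, Set.inter_iUnion]
  have hlim : Tendsto (fun n => P.real (s ∩ A n)) atTop (nhds (P.real (⋃ n, s ∩ A n))) :=
    (ENNReal.tendsto_toReal (measure_ne_top P _)).comp
      (tendsto_measure_iUnion_atTop fun n k hnk => Set.inter_subset_inter_right s (hA_mono hnk))
  refine le_of_tendsto' hlim fun n => ?_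
  rw [← hint (hA n) hs]
  exact setIntegral_mono_ae integrable_condExp.integrableOn hg_int.integrableOn (h n)

variable {M c : ℕ → Ω → ℝ}

theorem MeasureTheory.Supermartingale.mul_condExp_indicator_hittingAfter_le
    (hM : Supermartingale M ℱ P) (hM0 : ∀ t ω, 0 ≤ M t ω) (hc : StronglyAdapted ℱ c)
    (hc_mono : ∀ ω, Monotone fun t => c t ω) {t : ℕ} (hc0 : ∀ ω, 0 ≤ c t ω) (n : ℕ) :
    c t * P[{ω | hittingAfter (M - c) (Ici 0) t ω ≤ ↑(t + n)}.indicator fun _ => (1 : ℝ)|ℱ t]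
      ≤ᵐ[P] M t := by
  set τ := hittingAfter (M - c) (Ici 0) t
  set A := {ω | τ ω ≤ ↑(t + n)}
  have hτ : IsStoppingTime ℱ τ :=
    (hM.stronglyAdapted.sub hc).adapted.isStoppingTime_hittingAfter measurableSet_Ici
  have hA : MeasurableSet A := ℱ.le _ _ (hτ.measurableSet_le (t + n))
  have hMτ := hM.stoppedProcess hτ
  have hstart : stoppedProcess M τ t = M t :=
    funext fun ω => stoppedProcess_eq_of_le (le_hittingAfter ω)
  have hbound : c t * A.indicator (fun _ => 1) ≤ stoppedProcess M τ (t + n) := fun ω => by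
    by_cases hω : ω ∈ A
    · rw [Pi.mul_apply, indicator_of_mem hω, mul_one, stoppedProcess_eq_of_ge (i := t + n) hω]
      have hne : τ ω ≠ ⊤ := ne_top_of_le_ne_top (by simp) hω
      have hmem := hittingAfter_mem_set_of_ne_top hne
      have hle : t ≤ (τ ω).untopA := (WithTop.le_untopA_iff hne).2 (le_hittingAfter ω)
      simp only [Pi.sub_apply, mem_Ici, sub_nonneg] at hmem
      exact (hc_mono ω hle).trans hmem
    · rw [Pi.mul_apply, indicator_of_notMem hω, mul_zero]
      exact hM0 _ _
  have hint : Integrable (c t * A.indicator fun _ => 1) P := by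
    refine (hMτ.integrable (t + n)).mono' ?_ (ae_of_all _ fun ω => ?_)
    · exact (((hc t).mono (ℱ.le t)).mul
        (stronglyMeasurable_const.indicator hA)).aestronglyMeasurable
    · rw [Real.norm_eq_abs, Pi.mul_apply,
        abs_of_nonneg (mul_nonneg (hc0 ω) (indicator_nonneg (fun _ _ => zero_le_one) ω))]
      exact hbound ω
  calc c t * P[A.indicator fun _ => 1|ℱ t]
      =ᵐ[P] P[c t * A.indicator fun _ => 1|ℱ t] :=
        (condExp_mul_of_stronglyMeasurable_left (hc t) hint
          ((integrable_const 1).indicator hA)).symm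
    _ ≤ᵐ[P] P[stoppedProcess M τ (t + n)|ℱ t] :=
        condExp_mono hint (hMτ.integrable _) (ae_of_all _ hbound)
    _ ≤ᵐ[P] M t := hstart ▸ hMτ.condExp_ae_le (Nat.le_add_right t n)

end MaximalInequality

theorem condExp_indicator_natCast_le_tauF_le_div_runMax {Ω : Type*} {m0 : MeasurableSpace Ω}
    {P : Measure Ω} [IsFiniteMeasure P] {ℱ : Filtration ℕ m0} {M : ℕ → Ω → ℝ}
    (hM : Supermartingale M ℱ P) (hM0 : ∀ t ω, 0 ≤ M t ω) (hone : ∀ ω, 1 ≤ M 0 ω) (t : ℕ) :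
    P[{ω | (t : ℕ∞) ≤ tauF M ω}.indicator fun _ => (1 : ℝ)|ℱ t]
      ≤ᵐ[P] fun ω => M t ω / runMax M t ω := by
  have hS (ω) : 0 < runMax M t ω := runMax_pos (one_pos.trans_le (hone ω)) t
  have hMS := hM.stronglyAdapted.runMax
  set τ := hittingAfter (M - runMax M) (Ici 0) t
  have hτ : IsStoppingTime ℱ τ :=
    (hM.stronglyAdapted.sub hMS).adapted.isStoppingTime_hittingAfter measurableSet_Ici
  -- `τ` is the first time `≥ t` at which `M` attains its running maximum.
  have hB : {ω | (t : ℕ∞) ≤ tauF M ω} = ⋃ n, {ω | τ ω ≤ ↑(t + n)} := by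
    ext ω
    simp only [mem_ofPred_eq, mem_iUnion, natCast_le_tauF_iff, eq_runMax_iff_runMax_le]
    refine ⟨fun ⟨s, hts, hs⟩ => ⟨s - t, ?_⟩, fun ⟨n, hn⟩ => ?_⟩
    · exact (hittingAfter_le_iff (i := t + (s - t))).2 ⟨s, ⟨hts, by omega⟩, sub_nonneg.2 hs⟩
    · obtain ⟨s, hs, h⟩ := (hittingAfter_le_iff (i := t + n)).1 hn
      exact ⟨s, hs.1, sub_nonneg.1 h⟩
  rw [hB]
  refine condExp_indicator_iUnion_le (ℱ.le t) (fun n => ℱ.le _ _ (hτ.measurableSet_le (t + n)))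
    (fun n k hnk ω (hω : τ ω ≤ _) => hω.trans (Nat.cast_le.2 (Nat.add_le_add_left hnk t)))
    ((hM.stronglyAdapted t).measurable.div (hMS t).measurable).stronglyMeasurable ?_ fun n => ?_
  · simpa only [div_eq_mul_inv, Pi.inv_apply] using (hM.integrable t).mul_bdd (c := 1)
      ((hM.stronglyAdapted.inv_runMax t).mono (ℱ.le t)).aestronglyMeasurable
      (ae_of_all _ fun ω => by
        obtain ⟨h₀, h₁⟩ := inv_runMax_mem_Icc (hone ω) t
        exact (abs_of_nonneg h₀).trans_le h₁)
  · filter_upwards [hM.mul_condExp_indicator_hittingAfter_le hM0 hMS (fun ω => runMax_mono ω)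
      (fun ω => (hS ω).le) n] with ω hω
    rwa [le_div_iff₀ (hS ω), mul_comm]

/-- Decomposition `M_t/S_t = 1 + Q_t − L_t`; `Q` is a supermartingale, `L` is nondecreasing and
increases only when `M` attains a new maximum; consequently `Z_t ≤ 1 + Q_t − L_t` a.s. -/
theorem stmt3 {Ω : Type*} {m0 : MeasurableSpace Ω} {P : Measure Ω} [IsProbabilityMeasure P]
    (ℱ : Filtration ℕ m0) (M : ℕ → Ω → ℝ)
    (hsuper : Supermartingale M ℱ P) (hnonneg : ∀ t ω, 0 ≤ M t ω)
    (hone : ∀ ω, M 0 ω = 1) :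
    (∀ t ω, M t ω / runMax M t ω = 1 + Qproc M t ω - Lproc M t ω)
    ∧ Supermartingale (Qproc M) ℱ P
    ∧ (∀ ω, Monotone (fun t => Lproc M t ω))
    ∧ (∀ t ω, runMax M (t + 1) ω = runMax M t ω → Lproc M (t + 1) ω = Lproc M t ω)
    ∧ (∀ t : ℕ, ∀ᵐ ω ∂P,
        (P[Set.indicator {ω' | (t : ℕ∞) ≤ tauF M ω'} (fun _ => (1 : ℝ)) | ℱ t]) ω
          ≤ 1 + Qproc M t ω - Lproc M t ω) := by
  have hone' (ω) : 1 ≤ M 0 ω := (hone ω).ge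
  have hdecomp (t ω) := div_runMax_eq_one_add_Qproc_sub_Lproc (M := M) (ω := ω) (by simp [hone]) t
  refine ⟨hdecomp, Qproc_supermartingale hsuper hone',
    fun ω => Lproc_monotone (by simp [hone]) (fun t => hnonneg t ω),
    fun t ω => Lproc_succ_eq_of_runMax_succ_eq, fun t => ?_⟩
  filter_upwards [condExp_indicator_natCast_le_tauF_le_div_runMax hsuper hnonneg hone' t] with ω h
  exact (hdecomp t ω) ▸ h
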